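/- arXiv:1901.00532 — 2 statements merged into one kernel-verified Lean document; each statement's English description precedes it below -/
import Mathlib

section
/- On the distribution D₁, the classifier f*(x) = sign(∑ᵢ Round(xᵢ)), where Round maps any real to its nearest value in {-1, +1}, has adversarial loss at level ε < 1 equal to the standard loss of the majority classifier, hence at most exp(-c·n) for universal c > 0. -/
open scoped Classical
open Finset

/-- sign function: `1` if positive, `-1` otherwise.  Note that `sgn` also maps any
real to its nearest value in `{-1, +1}` (rounding), as used in the classifier below. -/
noncomputable def sgn (t : ℝ) : ℝ := if 0 < t then 1 else -1

/-- `±1` value of a boolean. -/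
def bv (b : Bool) : ℝ := if b then 1 else -1

/-- weight of an outcome `z` where `z i = true` means `x i = y`. -/
noncomputable def wt {n : ℕ} (z : Fin n → Bool) : ℝ :=
  ∏ i, if z i then (0.51 : ℝ) else 0.49

lemma bv_pm (b : Bool) : bv b = 1 ∨ bv b = -1 := by cases b <;> simp [bv]

lemma sgn_pm {u d : ℝ} (hu : u = 1 ∨ u = -1) (hd : |d| < 1) : sgn (u + d) = u := by
  rcases abs_lt.mp hd with ⟨h1, h2⟩
  rcases hu with rfl | rfl
  · simp [sgn, show (0:ℝ) < 1 + d by linarith]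
  · simp [sgn, show ¬ (0:ℝ) < -1 + d by linarith]

lemma wt_nonneg {n : ℕ} (z : Fin n → Bool) : 0 ≤ wt z :=
  Finset.prod_nonneg fun i _ => by split <;> norm_num

lemma wt_eq {n : ℕ} (z : Fin n → Bool) :
    wt z = 0.51 ^ (univ.filter (fun i => z i = true)).card *
      0.49 ^ (n - (univ.filter (fun i => z i = true)).card) := by
  have hc := Finset.card_filter_add_card_filter_not
    (s := (univ : Finset (Fin n))) (p := fun i => z i = true)
  simp only [Finset.card_univ, Fintype.card_fin] at hc
  rw [wt, Finset.prod_ite, Finset.prod_const, Finset.prod_const]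
  congr 2
  omega

lemma wt_le {n : ℕ} (z : Fin n → Bool)
    (h : 2 * (univ.filter (fun i => z i = true)).card ≤ n) :
    wt z ≤ Real.sqrt 0.2499 ^ n := by
  set k := (univ.filter (fun i => z i = true)).card with hk
  obtain ⟨m, hm⟩ : ∃ m, n = 2*k + m := ⟨n - 2*k, by omega⟩
  have h2 : wt z ^ 2 ≤ (0.2499:ℝ) ^ n := by
    rw [wt_eq, ← hk, mul_pow, ← pow_mul, ← pow_mul]
    have hnk : (n - k) * 2 = 2*k + 2*m := by omega
    have hk2 : k * 2 = 2 * k := by omega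
    rw [hnk, hk2, hm]
    have e1 : (0.51:ℝ)^(2*k) * (0.49:ℝ)^(2*k+2*m) = (0.2499:ℝ)^(2*k) * (0.2401:ℝ)^m := by
      rw [pow_add, ← mul_assoc, ← mul_pow, pow_mul]
      norm_num [pow_mul]
    rw [e1, pow_add]
    apply mul_le_mul_of_nonneg_left _ (by positivity)
    exact pow_le_pow_left₀ (by norm_num) (by norm_num) m
  have key : wt z ^ 2 ≤ (Real.sqrt 0.2499 ^ n)^2 := by
    rw [← pow_mul, mul_comm, pow_mul, Real.sq_sqrt (by norm_num)]
    exact h2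
  exact (pow_le_pow_iff_left₀ (wt_nonneg z) (pow_nonneg (Real.sqrt_nonneg _) n)
    two_ne_zero).mp key

lemma cond_imp {n : ℕ} (y : Bool) (z : Fin n → Bool)
    (h : sgn (∑ i, bv y * bv (z i)) ≠ bv y) :
    2 * (univ.filter (fun i => z i = true)).card ≤ n := by
  set k := (univ.filter (fun i => z i = true)).card with hk
  have hT : ∑ i, bv (z i) = 2 * (k:ℝ) - n := by
    have step : ∀ i : Fin n, bv (z i) = 2 * (if z i = true then (1:ℝ) else 0) - 1 := by
      intro i; cases h' : z i <;> norm_num [bv, h']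
    rw [Finset.sum_congr rfl fun i _ => step i, Finset.sum_sub_distrib,
      ← Finset.mul_sum, Finset.sum_boole, Finset.sum_const, Finset.card_univ,
      Fintype.card_fin]
    simp [hk]
  have hT0 : ∑ i, bv (z i) ≤ 0 := by
    cases y with
    | true =>
      have hb : bv true = 1 := rfl
      rw [hb] at h
      simp only [one_mul] at h
      by_contra hc
      push_neg at hc
      exact h (by rw [sgn, if_pos hc])
    | false =>
      have hb : bv false = -1 := rfl
      rw [hb] at h
      have hsum : ∑ i, (-1:ℝ) * bv (z i) = -∑ i, bv (z i) := by
        rw [← Finset.sum_neg_distrib]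
        simp
      rw [hsum] at h
      by_contra hc
      push_neg at hc
      have hx : ¬ (0:ℝ) < -∑ i, bv (z i) := by linarith
      exact h (by rw [sgn, if_neg hx])
  rw [hT] at hT0
  have : (2 * (k:ℝ)) ≤ n := by linarith
  exact_mod_cast this

/-- On D₁, the classifier `f*(x) = sign (∑ Round (xᵢ))` (where `Round` maps a real to
its nearest value in `{-1,1}`) has adversarial loss at level `ε < 1` equal to the
standard loss of the majority classifier, hence at most `exp (-c n)` for universal `c`. -/
theorem rounding_classifier_robust :
    ∃ c : ℝ, 0 < c ∧ ∀ (n : ℕ) (ε : ℝ), 0 ≤ ε → ε < 1 →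
      ((∑ p ∈ Finset.univ.filter
          (fun p : Bool × (Fin n → Bool) =>
            ∃ Δ : Fin n → ℝ, (∀ i, |Δ i| ≤ ε) ∧
              sgn (∑ i, sgn (bv p.1 * bv (p.2 i) + Δ i)) ≠ bv p.1),
        (1 / 2 : ℝ) * wt p.2)
      =
      (∑ p ∈ Finset.univ.filter
          (fun p : Bool × (Fin n → Bool) =>
            sgn (∑ i, bv p.1 * bv (p.2 i)) ≠ bv p.1),
        (1 / 2 : ℝ) * wt p.2))
      ∧
      (∑ p ∈ Finset.univ.filter
          (fun p : Bool × (Fin n → Bool) =>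
            ∃ Δ : Fin n → ℝ, (∀ i, |Δ i| ≤ ε) ∧
              sgn (∑ i, sgn (bv p.1 * bv (p.2 i) + Δ i)) ≠ bv p.1),
        (1 / 2 : ℝ) * wt p.2)
      ≤ Real.exp (-c * n) := by
  set a : ℝ := Real.sqrt 0.2499 with ha
  have ha0 : 0 < a := Real.sqrt_pos.mpr (by norm_num)
  have ha1 : a < 1/2 := by
    rw [ha, show (1/2 : ℝ) = Real.sqrt (1/4) by
      rw [show (1/4 : ℝ) = (1/2)^2 by norm_num, Real.sqrt_sq (by norm_num)]]
    exact Real.sqrt_lt_sqrt (by norm_num) (by norm_num)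
  have h2a0 : 0 < 2 * a := by linarith
  have h2a1 : 2 * a < 1 := by linarith
  refine ⟨-Real.log (2 * a), by
    have := Real.log_neg h2a0 h2a1
    linarith, ?_⟩
  intro n ε hε0 hε1
  have hfilt : ∀ p : Bool × (Fin n → Bool),
      (∃ Δ : Fin n → ℝ, (∀ i, |Δ i| ≤ ε) ∧
        sgn (∑ i, sgn (bv p.1 * bv (p.2 i) + Δ i)) ≠ bv p.1) ↔
      sgn (∑ i, bv p.1 * bv (p.2 i)) ≠ bv p.1 := by
    intro p
    have hpm : ∀ i, bv p.1 * bv (p.2 i) = 1 ∨ bv p.1 * bv (p.2 i) = -1 := by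
      intro i
      rcases bv_pm p.1 with h | h <;> rcases bv_pm (p.2 i) with h' | h' <;>
        simp [h, h']
    constructor
    · rintro ⟨Δ, hΔ, hne⟩
      have heq : ∀ i, sgn (bv p.1 * bv (p.2 i) + Δ i) = bv p.1 * bv (p.2 i) :=
        fun i => sgn_pm (hpm i) (lt_of_le_of_lt (hΔ i) hε1)
      rwa [Finset.sum_congr rfl fun i _ => heq i] at hne
    · intro h
      refine ⟨0, fun i => by simpa using hε0, ?_⟩
      have heq : ∀ i, sgn (bv p.1 * bv (p.2 i) + (0 : Fin n → ℝ) i)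
          = bv p.1 * bv (p.2 i) :=
        fun i => sgn_pm (hpm i) (by norm_num)
      rwa [Finset.sum_congr rfl fun i _ => heq i]
  have hfeq : Finset.univ.filter
      (fun p : Bool × (Fin n → Bool) =>
        ∃ Δ : Fin n → ℝ, (∀ i, |Δ i| ≤ ε) ∧
          sgn (∑ i, sgn (bv p.1 * bv (p.2 i) + Δ i)) ≠ bv p.1)
      = Finset.univ.filter
      (fun p : Bool × (Fin n → Bool) => sgn (∑ i, bv p.1 * bv (p.2 i)) ≠ bv p.1) :=
    Finset.filter_congr fun p _ => by
      constructor
      · exact (hfilt p).mp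
      · exact (hfilt p).mpr
  refine ⟨by rw [hfeq], ?_⟩
  rw [hfeq]
  set F := Finset.univ.filter
      (fun p : Bool × (Fin n → Bool) => sgn (∑ i, bv p.1 * bv (p.2 i)) ≠ bv p.1)
    with hF
  have hterm : ∀ p ∈ F, (1/2 : ℝ) * wt p.2 ≤ (1/2 : ℝ) * a ^ n := by
    intro p hp
    rw [hF, Finset.mem_filter] at hp
    have := cond_imp p.1 p.2 hp.2
    have hw := wt_le p.2 this
    rw [← ha] at hw
    linarith
  calc (∑ p ∈ F, (1/2 : ℝ) * wt p.2)
      ≤ ∑ _p ∈ F, (1/2 : ℝ) * a ^ n := Finset.sum_le_sum hterm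
    _ = (F.card : ℝ) * ((1/2 : ℝ) * a ^ n) := by
        rw [Finset.sum_const, nsmul_eq_mul]
    _ ≤ ((2 * 2 ^ n : ℕ) : ℝ) * ((1/2 : ℝ) * a ^ n) := by
        apply mul_le_mul_of_nonneg_right _ (by positivity)
        have hcard : F.card ≤ (Finset.univ : Finset (Bool × (Fin n → Bool))).card :=
          Finset.card_filter_le _ _
        have huniv : (Finset.univ : Finset (Bool × (Fin n → Bool))).card = 2 * 2 ^ n := by
          simp [Finset.card_univ]
        exact_mod_cast hcard.trans_eq huniv
    _ = (2 * a) ^ n := by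
        push_cast
        rw [mul_pow]
        ring
    _ = Real.exp (-(-Real.log (2 * a)) * n) := by
        rw [neg_neg, mul_comm (Real.log (2 * a)) (n : ℝ), Real.exp_nat_mul,
          Real.exp_log h2a0]
  -- done
end

section
/- In Construction 2 with ε < 1/8: the decoder that, for each i, outputs zᵢ' = 1 iff the mod-1 distance between the perturbed coordinates β'_{2i-1} and β'_{2i} exceeds 1/4, correctly recovers zᵢ for every perturbation Δ with ‖Δ‖_∞ ≤ ε. Consequently there is a classifier with adversarial loss 0. -/
/-- mod-1 (circular) distance between two reals. -/
noncomputable def cdist (u v : ℝ) : ℝ :=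
  min (Int.fract (u - v)) (1 - Int.fract (u - v))

lemma cdist_small {u v : ℝ} (h : |u - v| < 1 / 4) : cdist u v < 1 / 4 := by
  unfold cdist
  obtain ⟨ha, hb⟩ := abs_lt.1 h
  rcases le_or_gt 0 (u - v) with h0 | h0
  · have : Int.fract (u - v) = u - v := Int.fract_eq_self.2 ⟨h0, by linarith⟩
    rw [this]; exact lt_of_le_of_lt (min_le_left _ _) hb
  · have h1 : Int.fract (u - v) = u - v + 1 := by
      rw [← Int.fract_add_one (u - v)]
      exact Int.fract_eq_self.2 ⟨by linarith, by linarith⟩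
    rw [h1]
    refine lt_of_le_of_lt (min_le_right _ _) ?_
    linarith

lemma cdist_big {u v : ℝ} (h : |u - v - 1/2| < 1/4 ∨ |u - v + 1/2| < 1/4) :
    1 / 4 < cdist u v := by
  unfold cdist
  rcases h with h | h <;> obtain ⟨ha, hb⟩ := abs_lt.1 h
  · have : Int.fract (u - v) = u - v := Int.fract_eq_self.2 ⟨by linarith, by linarith⟩
    rw [this]; exact lt_min (by linarith) (by linarith)
  · have h1 : Int.fract (u - v) = u - v + 1 := by
      rw [← Int.fract_add_one (u - v)]
      exact Int.fract_eq_self.2 ⟨by linarith, by linarith⟩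
    rw [h1]; exact lt_min (by linarith) (by linarith)

/-- Construction 2, adversarially robust decoding of `z` from the β-pairs
`(bᵢ, bᵢ + zᵢ/2 mod 1)`: for `0 < ε < 1/8` and any perturbation with `‖Δ‖∞ ≤ ε`,
the decoder `zᵢ' = 1 ↔ (mod-1 distance of the perturbed pair) > 1/4` recovers each
`zᵢ`; consequently the classifier that decodes `z` and outputs `g(z)` always
outputs the true label (adversarial loss 0). -/
theorem construction2_adversarial_decoder (n : ℕ) (ε : ℝ) (hε : 0 < ε)
    (hε8 : ε < 1 / 8) (g : (Fin n → Bool) → Bool) (z : Fin n → Bool)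
    (b : Fin n → ℝ) (hb : ∀ i, b i ∈ Set.Ico (0 : ℝ) 1)
    (Δ₁ Δ₂ : Fin n → ℝ) (hΔ₁ : ∀ i, |Δ₁ i| ≤ ε) (hΔ₂ : ∀ i, |Δ₂ i| ≤ ε) :
    (∀ i, (1 / 4 < cdist (b i + Δ₁ i)
        (Int.fract (b i + (if z i then (1 / 2 : ℝ) else 0)) + Δ₂ i)) ↔ z i = true)
    ∧ g (fun i => decide (1 / 4 < cdist (b i + Δ₁ i)
        (Int.fract (b i + (if z i then (1 / 2 : ℝ) else 0)) + Δ₂ i))) = g z := by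
  have key : ∀ i, (1 / 4 < cdist (b i + Δ₁ i)
      (Int.fract (b i + (if z i then (1 / 2 : ℝ) else 0)) + Δ₂ i)) ↔ z i = true := by
    intro i
    obtain ⟨hb0, hb1⟩ := hb i
    obtain ⟨h1a, h1b⟩ := abs_lt.1 (lt_of_le_of_lt (hΔ₁ i) hε8)
    obtain ⟨h2a, h2b⟩ := abs_lt.1 (lt_of_le_of_lt (hΔ₂ i) hε8)
    cases hz : z i
    · simp only [hz, Bool.false_eq_true, if_false, iff_false, not_lt, add_zero]
      have hf : Int.fract (b i) = b i := Int.fract_eq_self.2 ⟨hb0, hb1⟩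
      rw [hf]
      exact le_of_lt (cdist_small (abs_lt.2 ⟨by linarith, by linarith⟩))
    · simp only [hz, if_true, iff_true]
      rcases lt_or_ge (b i) (1/2) with hlt | hge
      · have hf : Int.fract (b i + 1/2) = b i + 1/2 :=
          Int.fract_eq_self.2 ⟨by linarith, by linarith⟩
        rw [hf]
        refine cdist_big (Or.inr ?_)
        rw [abs_lt]; exact ⟨by linarith, by linarith⟩
      · have hf : Int.fract (b i + 1/2) = b i - 1/2 := by
          rw [show b i + 1/2 = (b i - 1/2) + 1 by ring, Int.fract_add_one]
          exact Int.fract_eq_self.2 ⟨by linarith, by linarith⟩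
        rw [hf]
        refine cdist_big (Or.inl ?_)
        rw [abs_lt]; exact ⟨by linarith, by linarith⟩
  refine ⟨key, ?_⟩
  congr 1
  funext i
  have k := key i
  cases hz : z i
  · rw [hz] at k
    simp only [decide_eq_false_iff_not]
    intro h
    exact Bool.false_ne_true (k.1 h)
  · rw [hz] at k
    exact decide_eq_true (k.2 rfl)
end
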